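/- arXiv:1902.09829 — 2 statements merged into one kernel-verified Lean document; each statement's English description precedes it below -/
import Mathlib

section
/- Let m, k be integers with 1 ≤ k ≤ m and for ε ∈ (0,1] let w_ε(x) = ε^{m-k}·exp(−x/ε) on (0,1). Then there exist constants c > 0 and C > 0 depending only on m and k such that for all ε ∈ (0,1]: c ≤ ε^{k−1/2}·(∫₀¹ |w_ε^{(m)}(x)|² dx)^{1/2} + Σ_{j=0}^{m-k} (∫₀¹ |w_ε^{(j)}(x)|² dx)^{1/2} ≤ C. In fact already ε^{k−1/2}·(∫₀¹ |w_ε^{(m)}(x)|² dx)^{1/2} = (½(1−exp(−2/ε)))^{1/2} ∈ [c, 1/√2]. Hence the balanced norm of the boundary layer function is bounded above and below by ε-independent positive constants, in contrast to its energy norm which is O(ε^{1/2}). -/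
open MeasureTheory Real

lemma iter_exp (a C0 : ℝ) (n : ℕ) :
    iteratedDeriv n (fun y : ℝ => C0 * Real.exp (a * y)) = fun x => C0 * a ^ n * Real.exp (a * x) := by
  induction n with
  | zero => simp
  | succ n ih =>
    rw [iteratedDeriv_succ, ih]
    funext x
    have h : HasDerivAt (fun x : ℝ => C0 * a ^ n * Real.exp (a * x))
        (C0 * a ^ n * (Real.exp (a * x) * a)) x := by
      simpa using (((hasDerivAt_id x).const_mul a).exp).const_mul (C0 * a ^ n)
    rw [h.deriv]; ring

lemma int_exp (b : ℝ) (hb : b ≠ 0) :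
    ∫ x in (0:ℝ)..1, Real.exp (b * x) = (Real.exp b - 1) / b := by
  have h : ∀ x : ℝ, HasDerivAt (fun y : ℝ => Real.exp (b * y) / b) (Real.exp (b * x)) x := by
    intro x
    have h2 := (((hasDerivAt_id x).const_mul b).exp).div_const b
    simp only [id_eq, mul_one] at h2
    rw [mul_div_assoc, div_self hb, mul_one] at h2
    exact h2
  have := intervalIntegral.integral_eq_sub_of_hasDerivAt (fun x _ => h x)
    ((Real.continuous_exp.comp (continuous_const.mul continuous_id)).intervalIntegrable 0 1)
  simp at this
  rw [this]; ring

lemma int_sq_exp (K b : ℝ) (hb : b ≠ 0) :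
    ∫ x in (0:ℝ)..1, (K * Real.exp (b * x)) ^ 2
      = K ^ 2 * ((Real.exp (2 * b) - 1) / (2 * b)) := by
  have h : ∀ x : ℝ, (K * Real.exp (b * x)) ^ 2 = K ^ 2 * Real.exp ((2 * b) * x) := by
    intro x
    rw [mul_pow, sq (Real.exp (b * x)), ← Real.exp_add]
    ring_nf
  simp_rw [h]
  rw [intervalIntegral.integral_const_mul, int_exp (2 * b) (mul_ne_zero two_ne_zero hb)]

lemma pow_calc (ε : ℝ) (hε : 0 < ε) (m k : ℕ) (hkm : k ≤ m) :
    (ε ^ ((k : ℝ) - 1/2)) ^ 2 * ((ε ^ (m - k) * (-ε⁻¹) ^ m) ^ 2 * ε) = 1 := by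
  have hne : ε ≠ 0 := hε.ne'
  have h1 : ((-ε⁻¹) ^ m) ^ 2 = ((ε ^ (2 * m)))⁻¹ := by
    rw [← pow_mul, Even.neg_pow ⟨m, by ring⟩, inv_pow, mul_comm]
  have h2 : (ε ^ (m - k)) ^ 2 = ε ^ (2 * (m - k)) := by rw [← pow_mul, mul_comm]
  have h3 : ε ^ (2 * m) = ε ^ (2 * (m - k)) * ε ^ (2 * k) := by
    rw [← pow_add]; congr 1; omega
  have h4 : (ε ^ ((k : ℝ) - 1/2)) ^ 2 = ε ^ ((2 * (k : ℝ)) - 1) := by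
    rw [sq, ← Real.rpow_add hε]; ring_nf
  rw [mul_pow, h1, h2, h3, h4]
  have h7 : ε ^ (2*(m-k)) * (ε ^ (2*(m-k)) * ε ^ (2*k))⁻¹ = (ε ^ (2*k))⁻¹ := by
    rw [mul_inv, ← mul_assoc, mul_inv_cancel₀ (pow_ne_zero _ hne), one_mul]
  rw [h7]
  have h8 : ((ε : ℝ) ^ (2*k))⁻¹ = ε ^ (-(2*(k:ℝ))) := by
    rw [← Real.rpow_natCast ε (2*k), ← Real.rpow_neg hε.le]
    norm_num
  rw [h8]
  have h9 : ε ^ ((2*(k:ℝ))-1) * (ε ^ (-(2*(k:ℝ))) * ε) = ε ^ (((2*(k:ℝ))-1) + (-(2*(k:ℝ)) + 1)) := by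
    rw [Real.rpow_add hε, Real.rpow_add hε, Real.rpow_one]
  rw [h9]
  norm_num

/-- The typical boundary layer function `w_ε(x) = ε^(m-k)·exp(-x/ε)` measured in the
balanced norm `ε^(k-1/2)·|·|_{H^m} + Σ_{j=0}^{m-k} |·|_{H^j}` on `(0,1)` is bounded
above and below by `ε`-independent positive constants `c, C` (depending only on `m, k`);
in fact already the weighted `H^m` seminorm part satisfies
`ε^(k-1/2)·(∫₀¹ |w_ε^{(m)}|²)^{1/2} = (½(1-exp(-2/ε)))^{1/2} ∈ [c, 1/√2]`. -/
theorem stmt_1 (m k : ℕ) (hk1 : 1 ≤ k) (hkm : k ≤ m) :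
    ∃ c C : ℝ, 0 < c ∧ 0 < C ∧
      ∀ ε : ℝ, 0 < ε → ε ≤ 1 →
        (c ≤
            ε ^ ((k : ℝ) - 1/2) * Real.sqrt (∫ x in (0:ℝ)..1,
                (iteratedDeriv m (fun y : ℝ => ε ^ (m - k) * Real.exp (-y / ε)) x) ^ 2)
            + ∑ j ∈ Finset.range (m - k + 1),
                Real.sqrt (∫ x in (0:ℝ)..1,
                  (iteratedDeriv j (fun y : ℝ => ε ^ (m - k) * Real.exp (-y / ε)) x) ^ 2)) ∧
        (ε ^ ((k : ℝ) - 1/2) * Real.sqrt (∫ x in (0:ℝ)..1,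
                (iteratedDeriv m (fun y : ℝ => ε ^ (m - k) * Real.exp (-y / ε)) x) ^ 2)
            + ∑ j ∈ Finset.range (m - k + 1),
                Real.sqrt (∫ x in (0:ℝ)..1,
                  (iteratedDeriv j (fun y : ℝ => ε ^ (m - k) * Real.exp (-y / ε)) x) ^ 2)
          ≤ C) ∧
        (ε ^ ((k : ℝ) - 1/2) * Real.sqrt (∫ x in (0:ℝ)..1,
              (iteratedDeriv m (fun y : ℝ => ε ^ (m - k) * Real.exp (-y / ε)) x) ^ 2)
          = Real.sqrt ((1 - Real.exp (-2 / ε)) / 2)) ∧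
        c ≤ Real.sqrt ((1 - Real.exp (-2 / ε)) / 2) ∧
        Real.sqrt ((1 - Real.exp (-2 / ε)) / 2) ≤ 1 / Real.sqrt 2 := by
  refine ⟨Real.sqrt ((1 - Real.exp (-2)) / 2), (m : ℝ) - k + 2, ?_, ?_, ?_⟩
  · apply Real.sqrt_pos.2
    have : Real.exp (-2) < 1 := Real.exp_lt_one_iff.2 (by norm_num)
    linarith
  · have : (k : ℝ) ≤ m := by exact_mod_cast hkm
    linarith
  intro ε hε hε1
  have hne : ε ≠ 0 := hε.ne'
  have ha : -ε⁻¹ ≠ 0 := by simp [hne]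
  -- rewrite the function
  have hfun : (fun y : ℝ => ε ^ (m - k) * Real.exp (-y / ε))
      = fun y => ε ^ (m - k) * Real.exp ((-ε⁻¹) * y) := by
    funext y; congr 1; ring_nf
  -- iterated derivatives and integrals
  have hiter : ∀ j : ℕ, ∀ x : ℝ,
      iteratedDeriv j (fun y : ℝ => ε ^ (m - k) * Real.exp (-y / ε)) x
        = (ε ^ (m - k) * (-ε⁻¹) ^ j) * Real.exp ((-ε⁻¹) * x) := by
    intro j x
    rw [hfun, iter_exp]
  set E := Real.exp (-2 / ε) with hE
  have hE1 : E < 1 := Real.exp_lt_one_iff.2 (div_neg_of_neg_of_pos (by norm_num) hε)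
  have hE0 : 0 < E := Real.exp_pos _
  have hrat : (Real.exp (2 * (-ε⁻¹)) - 1) / (2 * (-ε⁻¹)) = ε * ((1 - E) / 2) := by
    have h2a : 2 * (-ε⁻¹) = -2 / ε := by ring
    rw [h2a, hE]
    field_simp
    ring
  have hI : ∀ j : ℕ,
      (∫ x in (0:ℝ)..1,
        (iteratedDeriv j (fun y : ℝ => ε ^ (m - k) * Real.exp (-y / ε)) x) ^ 2)
      = (ε ^ (m - k) * (-ε⁻¹) ^ j) ^ 2 * (ε * ((1 - E) / 2)) := by
    intro j
    have : (∫ x in (0:ℝ)..1,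
        (iteratedDeriv j (fun y : ℝ => ε ^ (m - k) * Real.exp (-y / ε)) x) ^ 2)
        = ∫ x in (0:ℝ)..1, ((ε ^ (m - k) * (-ε⁻¹) ^ j) * Real.exp ((-ε⁻¹) * x)) ^ 2 := by
      apply intervalIntegral.integral_congr
      intro x _; simp only; rw [hiter j x]
    rw [this, int_sq_exp _ _ ha, hrat]
  -- the key equality
  have hkey : ε ^ ((k : ℝ) - 1/2) * Real.sqrt (∫ x in (0:ℝ)..1,
        (iteratedDeriv m (fun y : ℝ => ε ^ (m - k) * Real.exp (-y / ε)) x) ^ 2)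
      = Real.sqrt ((1 - E) / 2) := by
    rw [hI m]
    have hre : (ε ^ (m - k) * (-ε⁻¹) ^ m) ^ 2 * (ε * ((1 - E) / 2))
        = ((ε ^ (m - k) * (-ε⁻¹) ^ m) ^ 2 * ε) * ((1 - E) / 2) := by ring
    rw [hre, Real.sqrt_mul (by positivity), ← mul_assoc]
    have h10 : ε ^ ((k : ℝ) - 1/2) * Real.sqrt ((ε ^ (m - k) * (-ε⁻¹) ^ m) ^ 2 * ε) = 1 := by
      rw [show ε ^ ((k : ℝ) - 1/2) = Real.sqrt ((ε ^ ((k : ℝ) - 1/2)) ^ 2) from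
          (Real.sqrt_sq (Real.rpow_nonneg hε.le _)).symm,
        ← Real.sqrt_mul (sq_nonneg _), pow_calc ε hε m k hkm, Real.sqrt_one]
    rw [h10, one_mul]
  -- bound on each term of the sum
  have hterm : ∀ j ∈ Finset.range (m - k + 1),
      Real.sqrt (∫ x in (0:ℝ)..1,
        (iteratedDeriv j (fun y : ℝ => ε ^ (m - k) * Real.exp (-y / ε)) x) ^ 2) ≤ 1 := by
    intro j hj
    have hj' : j ≤ m - k := Finset.mem_range_succ_iff.1 hj
    rw [hI j]
    rw [Real.sqrt_le_one]
    have hsq : (ε ^ (m - k) * (-ε⁻¹) ^ j) ^ 2 = ε ^ (2 * (m - k - j)) := by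
      have e1 : ((-ε⁻¹) ^ j) ^ 2 = (ε ^ (2 * j))⁻¹ := by
        rw [← pow_mul, Even.neg_pow ⟨j, by ring⟩, inv_pow, mul_comm]
      have e2 : (ε ^ (m - k)) ^ 2 = ε ^ (2 * (m - k)) := by rw [← pow_mul, mul_comm]
      have e3 : ε ^ (2 * (m - k)) = ε ^ (2 * (m - k - j)) * ε ^ (2 * j) := by
        rw [← pow_add]; congr 1; omega
      rw [mul_pow, e1, e2, e3, mul_assoc, mul_inv_cancel₀ (pow_ne_zero _ hne), mul_one]
    rw [hsq]
    have b1 : ε ^ (2 * (m - k - j)) ≤ 1 := pow_le_one₀ hε.le hε1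
    have b2 : ε * ((1 - E) / 2) ≤ 1 := by nlinarith
    have b3 : 0 ≤ ε * ((1 - E) / 2) := by nlinarith
    calc ε ^ (2 * (m - k - j)) * (ε * ((1 - E) / 2)) ≤ 1 * 1 :=
          mul_le_mul b1 b2 b3 zero_le_one
      _ = 1 := mul_one 1
  have hsum_le : (∑ j ∈ Finset.range (m - k + 1),
      Real.sqrt (∫ x in (0:ℝ)..1,
        (iteratedDeriv j (fun y : ℝ => ε ^ (m - k) * Real.exp (-y / ε)) x) ^ 2))
      ≤ (m : ℝ) - k + 1 := by
    calc (∑ j ∈ Finset.range (m - k + 1),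
        Real.sqrt (∫ x in (0:ℝ)..1,
          (iteratedDeriv j (fun y : ℝ => ε ^ (m - k) * Real.exp (-y / ε)) x) ^ 2))
        ≤ ∑ _j ∈ Finset.range (m - k + 1), (1 : ℝ) := Finset.sum_le_sum hterm
      _ = (m - k + 1 : ℕ) := by simp
      _ = (m : ℝ) - k + 1 := by
          push_cast [Nat.cast_sub hkm]
          ring
  have hsum_nonneg : 0 ≤ (∑ j ∈ Finset.range (m - k + 1),
      Real.sqrt (∫ x in (0:ℝ)..1,
        (iteratedDeriv j (fun y : ℝ => ε ^ (m - k) * Real.exp (-y / ε)) x) ^ 2)) :=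
    Finset.sum_nonneg fun j _ => Real.sqrt_nonneg _
  -- lower bound for sqrt((1-E)/2)
  have hclow : Real.sqrt ((1 - Real.exp (-2)) / 2) ≤ Real.sqrt ((1 - E) / 2) := by
    apply Real.sqrt_le_sqrt
    have : E ≤ Real.exp (-2) := by
      apply Real.exp_le_exp.2
      rw [neg_div, neg_le_neg_iff]
      rw [le_div_iff₀ hε]
      nlinarith
    linarith
  have hchigh : Real.sqrt ((1 - E) / 2) ≤ 1 / Real.sqrt 2 := by
    rw [show (1:ℝ) / Real.sqrt 2 = Real.sqrt (1 / 2) by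
      rw [show (1:ℝ)/2 = 2⁻¹ by norm_num, Real.sqrt_inv, one_div]]
    apply Real.sqrt_le_sqrt
    linarith
  refine ⟨?_, ?_, hkey, hclow, hchigh⟩
  · rw [hkey]
    linarith
  · rw [hkey]
    have : Real.sqrt ((1 - E) / 2) ≤ 1 := by
      rw [Real.sqrt_le_one]; nlinarith
    linarith
end

section
/- Let m, k be integers with 1 ≤ k ≤ m, let N ≥ 1 be a natural number, and let h be a real with 0 < h ≤ 1. Then Σ_{n=m−k}^{m−1} N^n·N^{−2m}·h^n·(1 + h^{−(m−k)}) ≤ 2m·N^{−(m+k)}·(1 + (N·h)^{k−1}). -/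
/-!
Write `n = (m - k) + j` with `j ≤ k - 1`. Pulling out `N ^ (-(m + k))`, the `n`-th summand
becomes `(N h) ^ j · (h ^ (m - k) + 1)`, which is at most `2 (1 + (N h) ^ (k - 1))` because
`(N h) ^ j` lies below `1` or below `(N h) ^ (k - 1)` according as `N h ≤ 1` or not.
The sum has `k ≤ m` terms.
-/

lemma pow_le_one_add_pow {R : Type*} [Semiring R] [LinearOrder R] [IsOrderedRing R]
    {x : R} (hx : 0 ≤ x) {j K : ℕ} (hjK : j ≤ K) : x ^ j ≤ 1 + x ^ K := by
  rcases le_total x 1 with hx1 | hx1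
  · exact le_add_of_le_of_nonneg (pow_le_one₀ hx hx1) (pow_nonneg hx K)
  · exact le_add_of_nonneg_of_le zero_le_one (pow_le_pow_right₀ hx1 hjK)

lemma pow_mul_zpow_mul_pow_mul_one_add_zpow {K : Type*} [Field K] {x y : K}
    (hx : x ≠ 0) (hy : y ≠ 0) (a c j : ℕ) :
    x ^ (a + j) * x ^ (-((a + c : ℕ) : ℤ)) * y ^ (a + j) * (1 + y ^ (-(a : ℤ)))
      = x ^ (-(c : ℤ)) * (x * y) ^ j * (y ^ a + 1) := by
  simp only [zpow_neg, zpow_natCast, pow_add, mul_pow]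
  field_simp

lemma pow_mul_zpow_mul_pow_mul_one_add_zpow_le {x y : ℝ} (hx : 0 < x) (hy₀ : 0 < y)
    (hy₁ : y ≤ 1) (a c : ℕ) {j K : ℕ} (hjK : j ≤ K) :
    x ^ (a + j) * x ^ (-((a + c : ℕ) : ℤ)) * y ^ (a + j) * (1 + y ^ (-(a : ℤ)))
      ≤ 2 * x ^ (-(c : ℤ)) * (1 + (x * y) ^ K) := by
  rw [pow_mul_zpow_mul_pow_mul_one_add_zpow hx.ne' hy₀.ne']
  have hxy : (x * y) ^ j * (y ^ a + 1) ≤ (1 + (x * y) ^ K) * 2 :=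
    mul_le_mul (pow_le_one_add_pow (by positivity) hjK)
      (by linarith [pow_le_one₀ hy₀.le hy₁ (n := a)]) (by positivity) (by positivity)
  calc x ^ (-(c : ℤ)) * (x * y) ^ j * (y ^ a + 1)
      = x ^ (-(c : ℤ)) * ((x * y) ^ j * (y ^ a + 1)) := by ring
    _ ≤ x ^ (-(c : ℤ)) * ((1 + (x * y) ^ K) * 2) := by gcongr
    _ = 2 * x ^ (-(c : ℤ)) * (1 + (x * y) ^ K) := by ring

/-- Computational core of estimate (13) in the proof of Lemma 4: for `1 ≤ k ≤ m`,
`N ≥ 1` and `0 < h ≤ 1` one has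
`Σ_{n=m-k}^{m-1} N^n·N^{-2m}·h^n·(1 + h^{-(m-k)}) ≤ 2m·N^{-(m+k)}·(1 + (N·h)^{k-1})`. -/
theorem stmt_11 (m k : ℕ) (hk1 : 1 ≤ k) (hkm : k ≤ m) (N : ℕ) (hN : 1 ≤ N)
    (h : ℝ) (hh0 : 0 < h) (hh1 : h ≤ 1) :
    ∑ n ∈ Finset.Icc (m - k) (m - 1),
        (N : ℝ) ^ n * (N : ℝ) ^ (-(2 * (m : ℤ))) * h ^ n * (1 + h ^ (-((m : ℤ) - k)))
      ≤ 2 * m * (N : ℝ) ^ (-((m : ℤ) + k)) * (1 + ((N : ℝ) * h) ^ (k - 1)) := by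
  have hN₀ : (0 : ℝ) < N := by exact_mod_cast hN
  set bound := 2 * (N : ℝ) ^ (-((m : ℤ) + k)) * (1 + ((N : ℝ) * h) ^ (k - 1))
  have hterm : ∀ n ∈ Finset.Icc (m - k) (m - 1),
      (N : ℝ) ^ n * (N : ℝ) ^ (-(2 * (m : ℤ))) * h ^ n * (1 + h ^ (-((m : ℤ) - k)))
        ≤ bound := by
    intro n hn
    obtain ⟨j, rfl, hj⟩ : ∃ j, n = m - k + j ∧ j ≤ k - 1 :=
      ⟨n - (m - k), by grind, by grind⟩
    convert pow_mul_zpow_mul_pow_mul_one_add_zpow_le hN₀ hh0 hh1 (m - k) (m + k) hj using 4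
    · rw [show m - k + (m + k) = 2 * m by omega]; push_cast; ring
    · push_cast [hkm]; ring
    · push_cast; ring
  have hcard : (Finset.Icc (m - k) (m - 1)).card = k := by
    rw [Nat.card_Icc]; omega
  calc _ ≤ (Finset.Icc (m - k) (m - 1)).card • bound := Finset.sum_le_card_nsmul _ _ _ hterm
    _ = k * bound := by rw [hcard, nsmul_eq_mul]
    _ ≤ m * bound := by gcongr
    _ = _ := by ring
end
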